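/- arXiv:1410.6880 — 2 statements merged into one kernel-verified Lean document; each statement's English description precedes it below -/
import Mathlib

section
/- (KKT-based zero test.) Suppose β* is an optimal solution of the overlapping group lasso problem min_β ½‖y − Xβ‖₂² + λ Σ_{g∈G} √(n_g)‖β_g‖₂, and let θ* = (y − Xβ*)/λ. Fix a group g ∈ G and let Ḡ₁ be the set of groups h ∈ G \ {g} with h ⊆ g. If there exist vectors w_h ∈ ℝ^{h} with ‖w_h‖₂ ≤ 1 for each h ∈ Ḡ₁ such that √( Σ_{j∈g} ( x_jᵀθ* − Σ_{h∈Ḡ₁: j∈h} √(n_h)·(w_h)_j )² ) < √(n_g), then β*_g = 0. -/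
/-!
Shrinking `β*` on `g` to `β* - t • β*_g` multiplies the penalty of every group `h ⊆ g` by `1 - t`
and increases no other group's penalty, so optimality yields the first-order condition
`λ ∑_{h ∈ G, h ⊆ g} √n_h ‖β*_h‖ ≤ ⟨y - Xβ*, Xβ*_g⟩ = λ ∑_{j ∈ g} (x_jᵀθ*) β*_j`.
Splitting `x_jᵀθ*` into the screened residual and the `w`-part, Cauchy–Schwarz bounds the
right-hand side by `√n_g ‖β*_g‖ + ∑_{h ∈ Ḡ₁} √n_h ‖β*_h‖`, the left-hand side divided by `λ`,
and strictly so unless `β*_g = 0`.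
-/

open Finset Filter Topology Matrix

noncomputable def groupLassoPenalty {ι : Type*} (G : Finset (Finset ι)) (β : ι → ℝ) : ℝ :=
  ∑ h ∈ G, √(h.card : ℝ) * √(∑ j ∈ h, β j ^ 2)

section Shrinkage

variable {ι : Type*} [DecidableEq ι] (g : Finset ι) (β : ι → ℝ) {t : ℝ}

theorem sub_smul_indicator_apply (t : ℝ) (j : ι) :
    (β - t • (g : Set ι).indicator β) j = (if j ∈ g then 1 - t else 1) * β j := by
  by_cases hj : j ∈ g <;> simp [hj, sub_mul]

theorem sqrt_sum_sq_sub_smul_indicator_of_subset {h : Finset ι} (hhg : h ⊆ g) (ht : t ≤ 1) :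
    √(∑ j ∈ h, (β - t • (g : Set ι).indicator β) j ^ 2) = (1 - t) * √(∑ j ∈ h, β j ^ 2) := by
  have hterm : ∀ j ∈ h, (β - t • (g : Set ι).indicator β) j ^ 2 = (1 - t) ^ 2 * β j ^ 2 := by
    intro j hj
    rw [sub_smul_indicator_apply, if_pos (hhg hj), mul_pow]
  rw [sum_congr rfl hterm, ← mul_sum, Real.sqrt_mul (sq_nonneg _), Real.sqrt_sq (by linarith)]

theorem sqrt_sum_sq_sub_smul_indicator_le (h : Finset ι) (ht₀ : 0 ≤ t) (ht₁ : t ≤ 1) :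
    √(∑ j ∈ h, (β - t • (g : Set ι).indicator β) j ^ 2) ≤ √(∑ j ∈ h, β j ^ 2) := by
  refine Real.sqrt_le_sqrt (sum_le_sum fun j _ => ?_)
  rw [sub_smul_indicator_apply, mul_pow]
  refine mul_le_of_le_one_left (sq_nonneg _) ?_
  split_ifs
  · nlinarith
  · norm_num

theorem groupLassoPenalty_sub_smul_indicator_le (G : Finset (Finset ι)) (ht₀ : 0 ≤ t)
    (ht₁ : t ≤ 1) :
    groupLassoPenalty G (β - t • (g : Set ι).indicator β)
      ≤ groupLassoPenalty G β - t * groupLassoPenalty (G.filter (· ⊆ g)) β := by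
  unfold groupLassoPenalty
  rw [← sum_filter_add_sum_filter_not G (· ⊆ g),
    ← sum_filter_add_sum_filter_not G (· ⊆ g) (fun h => √(h.card : ℝ) * √(∑ j ∈ h, β j ^ 2))]
  have hinside : ∑ h ∈ G.filter (· ⊆ g),
        √(h.card : ℝ) * √(∑ j ∈ h, (β - t • (g : Set ι).indicator β) j ^ 2)
      = (1 - t) * ∑ h ∈ G.filter (· ⊆ g), √(h.card : ℝ) * √(∑ j ∈ h, β j ^ 2) := by
    rw [mul_sum]
    refine sum_congr rfl fun h hh => ?_
    rw [sqrt_sum_sq_sub_smul_indicator_of_subset g β (mem_filter.mp hh).2 ht₁, mul_left_comm]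
  have houtside : ∑ h ∈ G.filter (¬ · ⊆ g),
        √(h.card : ℝ) * √(∑ j ∈ h, (β - t • (g : Set ι).indicator β) j ^ 2)
      ≤ ∑ h ∈ G.filter (¬ · ⊆ g), √(h.card : ℝ) * √(∑ j ∈ h, β j ^ 2) :=
    sum_le_sum fun h _ => mul_le_mul_of_nonneg_left
      (sqrt_sum_sq_sub_smul_indicator_le g β h ht₀ ht₁) (Real.sqrt_nonneg _)
  linarith

theorem groupLassoPenalty_filter_subset {G : Finset (Finset ι)} {g : Finset ι} (hg : g ∈ G)
    (β : ι → ℝ) :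
    groupLassoPenalty (G.filter (· ⊆ g)) β
      = √(g.card : ℝ) * √(∑ j ∈ g, β j ^ 2) + groupLassoPenalty ((G.erase g).filter (· ⊆ g)) β := by
  rw [filter_erase, groupLassoPenalty, groupLassoPenalty]
  exact (add_sum_erase (G.filter (· ⊆ g)) _ (mem_filter.mpr ⟨hg, subset_refl g⟩)).symm

end Shrinkage

section LeastSquares

variable {m n : Type*} [Fintype m] [Fintype n]

theorem sum_sq_sub_mulVec_sub_smul (X : Matrix m n ℝ) (y : m → ℝ) (β d : n → ℝ) (t : ℝ) :
    ∑ i, (y i - (X *ᵥ (β - t • d)) i) ^ 2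
      = ∑ i, (y i - (X *ᵥ β) i) ^ 2 + 2 * t * ∑ i, (y i - (X *ᵥ β) i) * (X *ᵥ d) i
        + t ^ 2 * ∑ i, (X *ᵥ d) i ^ 2 := by
  simp only [mulVec_sub, mulVec_smul, mul_sum, ← sum_add_distrib]
  refine sum_congr rfl fun i _ => ?_
  simp only [Pi.sub_apply, Pi.smul_apply, smul_eq_mul]
  ring

theorem sum_mul_mulVec_indicator (X : Matrix m n ℝ) (r : m → ℝ) (g : Finset n)
    (β : n → ℝ) :
    ∑ i, r i * (X *ᵥ (g : Set n).indicator β) i = ∑ j ∈ g, (∑ i, X i j * r i) * β j := by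
  have hpair : ∑ i, r i * (X *ᵥ (g : Set n).indicator β) i
      = ∑ j, (∑ i, X i j * r i) * (g : Set n).indicator β j := by
    simpa only [dotProduct, vecMul, mul_comm (r _)] using dotProduct_mulVec r X _
  rw [hpair, sum_indicator_subset_of_eq_zero β (fun j b => (∑ i, X i j * r i) * b)
    (subset_univ g) fun _ => mul_zero _]

end LeastSquares

theorem nonneg_of_forall_add_mul_nonneg {a b : ℝ} (h : ∀ t, 0 < t → t ≤ 1 → 0 ≤ a + t * b) :
    0 ≤ a := by
  have hlim : Tendsto (fun t => a + t * b) (𝓝[>] 0) (𝓝 a) :=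
    ((continuous_const.add (continuous_id.mul continuous_const)).tendsto' 0 a (by simp)).mono_left
      nhdsWithin_le_nhds
  refine ge_of_tendsto hlim ?_
  filter_upwards [Ioc_mem_nhdsGT one_pos] with t ht using h t ht.1 ht.2

theorem mul_le_sum_residual_mul_mulVec_of_isMin {m n : Type*} [Fintype m] [Fintype n]
    (X : Matrix m n ℝ) (y : m → ℝ) {lam : ℝ} (hlam : 0 ≤ lam) (P : (n → ℝ) → ℝ)
    {βstar : n → ℝ} (d : n → ℝ) {K : ℝ}
    (hopt : ∀ β, (1 / 2) * ∑ i, (y i - (X *ᵥ βstar) i) ^ 2 + lam * P βstar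
      ≤ (1 / 2) * ∑ i, (y i - (X *ᵥ β) i) ^ 2 + lam * P β)
    (hdescent : ∀ t, 0 < t → t ≤ 1 → P (βstar - t • d) ≤ P βstar - t * K) :
    lam * K ≤ ∑ i, (y i - (X *ᵥ βstar) i) * (X *ᵥ d) i := by
  set C := ∑ i, (y i - (X *ᵥ βstar) i) * (X *ᵥ d) i
  set Q := ∑ i, (X *ᵥ d) i ^ 2
  suffices 0 ≤ C - lam * K by linarith
  refine nonneg_of_forall_add_mul_nonneg (b := Q / 2) fun t ht₀ ht₁ => ?_
  have hloss := sum_sq_sub_mulVec_sub_smul X y βstar d t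
  have hpen := mul_le_mul_of_nonneg_left (hdescent t ht₀ ht₁) hlam
  have hopt_t := hopt (βstar - t • d)
  have hscaled : 0 ≤ t * (C - lam * K + t * (Q / 2)) := by linarith
  exact (mul_nonneg_iff_of_pos_left ht₀).mp hscaled

theorem sum_mul_lt_mul_sqrt_sum_sq {ι : Type*} {s : Finset ι} {u v : ι → ℝ} {c : ℝ}
    (hu : √(∑ j ∈ s, u j ^ 2) < c) (hv : ∃ j ∈ s, v j ≠ 0) :
    ∑ j ∈ s, u j * v j < c * √(∑ j ∈ s, v j ^ 2) := by
  obtain ⟨j, hj, hvj⟩ := hv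
  have hpos : 0 < √(∑ j ∈ s, v j ^ 2) :=
    Real.sqrt_pos.mpr (sum_pos' (fun _ _ => sq_nonneg _) ⟨j, hj, by positivity⟩)
  calc ∑ j ∈ s, u j * v j ≤ √(∑ j ∈ s, u j ^ 2) * √(∑ j ∈ s, v j ^ 2) :=
        Real.sum_mul_le_sqrt_mul_sqrt s u v
    _ < c * √(∑ j ∈ s, v j ^ 2) := mul_lt_mul_of_pos_right hu hpos

theorem mul_sum_mul_le_of_sqrt_sum_sq_le_one {ι : Type*} {s : Finset ι} {w : ι → ℝ}
    (hw : √(∑ j ∈ s, w j ^ 2) ≤ 1) (β : ι → ℝ) :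
    √(s.card : ℝ) * ∑ j ∈ s, w j * β j ≤ √(s.card : ℝ) * √(∑ j ∈ s, β j ^ 2) := by
  refine mul_le_mul_of_nonneg_left ?_ (Real.sqrt_nonneg _)
  calc ∑ j ∈ s, w j * β j ≤ √(∑ j ∈ s, w j ^ 2) * √(∑ j ∈ s, β j ^ 2) :=
        Real.sum_mul_le_sqrt_mul_sqrt s w β
    _ ≤ √(∑ j ∈ s, β j ^ 2) := mul_le_of_le_one_left (Real.sqrt_nonneg _) hw

theorem sum_sum_ite_mul_le_groupLassoPenalty {ι : Type*} [DecidableEq ι] {g : Finset ι}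
    {H : Finset (Finset ι)} (hH : ∀ h ∈ H, h ⊆ g) {w : Finset ι → ι → ℝ}
    (hw : ∀ h ∈ H, √(∑ j ∈ h, w h j ^ 2) ≤ 1) (β : ι → ℝ) :
    ∑ j ∈ g, (∑ h ∈ H, if j ∈ h then √(h.card : ℝ) * w h j else 0) * β j
      ≤ groupLassoPenalty H β := by
  have hswap : ∑ j ∈ g, (∑ h ∈ H, if j ∈ h then √(h.card : ℝ) * w h j else 0) * β j
      = ∑ h ∈ H, √(h.card : ℝ) * ∑ j ∈ h, w h j * β j := by
    simp only [sum_mul, ite_mul, zero_mul]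
    rw [sum_comm]
    refine sum_congr rfl fun h hh => ?_
    rw [← sum_filter, filter_mem_eq_inter, inter_eq_right.mpr (hH h hh), mul_sum]
    exact sum_congr rfl fun j _ => by ring
  rw [hswap]
  exact sum_le_sum fun h hh => mul_sum_mul_le_of_sqrt_sum_sq_le_one (hw h hh) β

/-- KKT-based zero test for overlapping group lasso: if the screening quantity for
group g (using inclusive subgroups Ḡ₁) is below √(n_g), then β*_g = 0. -/
theorem kkt_zero_test {N J : ℕ} (X : Matrix (Fin N) (Fin J) ℝ) (y : Fin N → ℝ)
    (lam : ℝ) (hlam : 0 < lam)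
    (G : Finset (Finset (Fin J))) (g : Finset (Fin J)) (hg : g ∈ G)
    (βstar : Fin J → ℝ)
    (hopt : ∀ β : Fin J → ℝ,
      (1 / 2) * (∑ i, (y i - X.mulVec βstar i) ^ 2)
        + lam * ∑ h ∈ G, Real.sqrt (h.card : ℝ) * Real.sqrt (∑ j ∈ h, βstar j ^ 2)
      ≤ (1 / 2) * (∑ i, (y i - X.mulVec β i) ^ 2)
        + lam * ∑ h ∈ G, Real.sqrt (h.card : ℝ) * Real.sqrt (∑ j ∈ h, β j ^ 2))
    (θstar : Fin N → ℝ) (hθ : ∀ i, θstar i = (y i - X.mulVec βstar i) / lam)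
    (G1 : Finset (Finset (Fin J))) (hG1 : G1 = (G.erase g).filter (fun h => h ⊆ g))
    (w : Finset (Fin J) → Fin J → ℝ)
    (hw : ∀ h ∈ G1, Real.sqrt (∑ j ∈ h, (w h j) ^ 2) ≤ 1)
    (hscreen : Real.sqrt (∑ j ∈ g,
        ((∑ i, X i j * θstar i)
          - ∑ h ∈ G1, (if j ∈ h then Real.sqrt (h.card : ℝ) * w h j else 0)) ^ 2)
      < Real.sqrt (g.card : ℝ)) :
    ∀ j ∈ g, βstar j = 0 := by
  subst hG1
  have hresidual : ∀ i, y i - (X *ᵥ βstar) i = lam * θstar i := fun i => by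
    rw [hθ i, mul_div_cancel₀ _ hlam.ne']
  have hfirst : groupLassoPenalty (G.filter (· ⊆ g)) βstar
      ≤ ∑ j ∈ g, (∑ i, X i j * θstar i) * βstar j := by
    refine le_of_mul_le_mul_left ?_ hlam
    simpa only [hresidual, sum_mul_mulVec_indicator, ← mul_sum, mul_assoc] using
      mul_le_sum_residual_mul_mulVec_of_isMin X y hlam.le (groupLassoPenalty G)
        ((g : Set (Fin J)).indicator βstar) hopt fun t ht₀ ht₁ =>
          groupLassoPenalty_sub_smul_indicator_le g βstar G ht₀.le ht₁
  have hsplit := groupLassoPenalty_filter_subset hg βstar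
  have hsubgroups := sum_sum_ite_mul_le_groupLassoPenalty (g := g)
    (fun h hh => (mem_filter.mp hh).2) hw βstar
  by_contra! hne
  have hstrict := sum_mul_lt_mul_sqrt_sum_sq hscreen hne
  simp only [sub_mul, sum_sub_distrib] at hstrict
  linarith
end

section
/- (Theorem 1, OLS screening rule.) Consider the overlapping group lasso min_β ½‖y − Xβ‖₂² + λ Σ_{g∈G} √(n_g)‖β_g‖₂. Let θ*(λ₀) be the dual optimal at regularization parameter λ₀ (equal to (y − Xβ*(λ₀))/λ₀ where β*(λ₀) is a primal optimum), and let 0 < λ < λ₀. Fix g ∈ G and let Ḡ₁ = {h ∈ G \ {g} : h ⊆ g}. If min over w_h with ‖w_h‖₂ ≤ 1 (h ∈ Ḡ₁) of √( Σ_{j∈g} ( x_jᵀθ*(λ₀) − Σ_{h∈Ḡ₁: j∈h} √(n_h)(w_h)_j )² ) < √(n_g) − ‖X_g‖_F‖y‖₂·(1/λ − 1/λ₀), then β*_g(λ) = 0 for every optimal solution β*(λ) at parameter λ. -/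
/-!
The dual point θ(λ) = (y − Xβ*(λ))/λ lies in F = {θ : ⟨θ, Xβ⟩ ≤ Ω(β) for all β} and satisfies
⟨θ(λ), Xβ*(λ)⟩ = Ω(β*(λ)); together these say that θ(λ) is the projection of y/λ onto the convex
set F. Projections are nonexpansive, so ‖θ(λ) − θ(λ₀)‖ ≤ ‖y‖ (1/λ − 1/λ₀), and the screening
hypothesis upgrades to ‖X_gᵀθ(λ) − Σ_{h ∈ Ḡ₁} √n_h w_h‖ < √n_g. On the other hand, setting the
g-block of β*(λ) to zero removes from Ω at least the terms of g and of the groups in Ḡ₁, so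
optimality gives √n_g ‖β_g‖ ≤ ‖X_gᵀθ(λ) − Σ_h √n_h w_h‖ ‖β_g‖, which forces β_g = 0.
-/

/-- The overlapping group lasso objective ½‖y − Xβ‖² + λ Σ_g √(n_g)‖β_g‖₂. -/
noncomputable def ogLassoObj {N J : ℕ} (X : Matrix (Fin N) (Fin J) ℝ) (y : Fin N → ℝ)
    (G : Finset (Finset (Fin J))) (lam : ℝ) (β : Fin J → ℝ) : ℝ :=
  (1 / 2) * (∑ i, (y i - X.mulVec β i) ^ 2)
    + lam * ∑ h ∈ G, Real.sqrt (h.card : ℝ) * Real.sqrt (∑ j ∈ h, β j ^ 2)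

open Finset Matrix Filter Topology

noncomputable def normOn {ι : Type*} (s : Finset ι) (f : ι → ℝ) : ℝ :=
  √(∑ i ∈ s, f i ^ 2)

section normOn

variable {ι : Type*} (s : Finset ι)

theorem normOn_nonneg (f : ι → ℝ) : 0 ≤ normOn s f := Real.sqrt_nonneg _

theorem normOn_univ_eq_norm [Fintype ι] (f : ι → ℝ) :
    normOn univ f = ‖(WithLp.toLp 2 f : EuclideanSpace ℝ ι)‖ := by
  simp [normOn, EuclideanSpace.norm_eq]

theorem normOn_eq_norm (f : ι → ℝ) :
    normOn s f = ‖(WithLp.toLp 2 (fun i : s => f i) : EuclideanSpace ℝ s)‖ := by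
  rw [← normOn_univ_eq_norm, normOn, normOn, ← sum_coe_sort s]

theorem normOn_add_le (f g : ι → ℝ) : normOn s (f + g) ≤ normOn s f + normOn s g := by
  calc normOn s (f + g)
      = ‖(WithLp.toLp 2 ((fun i : s => f i) + fun i : s => g i) : EuclideanSpace ℝ s)‖ :=
        normOn_eq_norm s _
    _ ≤ normOn s f + normOn s g := by
        rw [WithLp.toLp_add, normOn_eq_norm, normOn_eq_norm]
        exact norm_add_le _ _

theorem normOn_smul (c : ℝ) (f : ι → ℝ) : normOn s (c • f) = |c| * normOn s f := by
  calc normOn s (c • f)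
      = ‖(WithLp.toLp 2 (c • fun i : s => f i) : EuclideanSpace ℝ s)‖ := normOn_eq_norm s _
    _ = |c| * normOn s f := by
        rw [WithLp.toLp_smul, norm_smul, Real.norm_eq_abs, normOn_eq_norm]

theorem sum_mul_le_normOn_mul (f g : ι → ℝ) :
    ∑ i ∈ s, f i * g i ≤ normOn s f * normOn s g :=
  Real.sum_mul_le_sqrt_mul_sqrt s f g

theorem normOn_le_normOn_of_sq_le {f g : ι → ℝ} (h : ∀ i ∈ s, f i ^ 2 ≤ g i ^ 2) :
    normOn s f ≤ normOn s g :=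
  Real.sqrt_le_sqrt (sum_le_sum h)

theorem normOn_eq_zero_iff {f : ι → ℝ} : normOn s f = 0 ↔ ∀ i ∈ s, f i = 0 := by
  rw [normOn, Real.sqrt_eq_zero (sum_nonneg fun i _ => sq_nonneg (f i)),
    sum_eq_zero_iff_of_nonneg fun i _ => sq_nonneg (f i)]
  simp

end normOn

noncomputable def groupPenalty {ι : Type*} (G : Finset (Finset ι)) (β : ι → ℝ) : ℝ :=
  ∑ h ∈ G, √(h.card : ℝ) * normOn h β

section groupPenalty

variable {ι : Type*} (G : Finset (Finset ι))

theorem groupPenalty_add_le (a b : ι → ℝ) :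
    groupPenalty G (a + b) ≤ groupPenalty G a + groupPenalty G b := by
  rw [groupPenalty, groupPenalty, groupPenalty, ← sum_add_distrib]
  gcongr with h
  rw [← mul_add]
  exact mul_le_mul_of_nonneg_left (normOn_add_le h a b) (Real.sqrt_nonneg _)

theorem groupPenalty_smul (c : ℝ) (β : ι → ℝ) :
    groupPenalty G (c • β) = |c| * groupPenalty G β := by
  simp only [groupPenalty, normOn_smul, mul_sum]
  exact sum_congr rfl fun h _ => by ring

theorem groupPenalty_zero : groupPenalty G 0 = 0 := by
  simpa using groupPenalty_smul G 0 0

theorem groupPenalty_add_smul_sub_le (a b : ι → ℝ) {t : ℝ} (ht0 : 0 ≤ t) (ht1 : t ≤ 1) :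
    groupPenalty G (a + t • (b - a))
      ≤ groupPenalty G a + t * (groupPenalty G b - groupPenalty G a) := by
  have hconv : a + t • (b - a) = (1 - t) • a + t • b := by
    rw [smul_sub, sub_smul, one_smul]; abel
  calc groupPenalty G (a + t • (b - a))
      ≤ groupPenalty G ((1 - t) • a) + groupPenalty G (t • b) :=
        hconv ▸ groupPenalty_add_le G _ _
    _ = _ := by
        rw [groupPenalty_smul, groupPenalty_smul, abs_of_nonneg (by linarith), abs_of_nonneg ht0]
        ring

end groupPenalty

section ZeroBlock

variable {ι : Type*} [DecidableEq ι] {g : Finset ι}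

theorem normOn_piecewise_zero_le (h : Finset ι) (β : ι → ℝ) :
    normOn h (g.piecewise 0 β) ≤ normOn h β :=
  normOn_le_normOn_of_sq_le h fun j _ => by
    by_cases hj : j ∈ g
    · simp [piecewise_eq_of_mem _ _ _ hj, sq_nonneg]
    · rw [piecewise_eq_of_notMem _ _ _ hj]

theorem normOn_piecewise_zero_of_subset {h : Finset ι} (hh : h ⊆ g) (β : ι → ℝ) :
    normOn h (g.piecewise 0 β) = 0 :=
  (normOn_eq_zero_iff h).2 fun _ hj => piecewise_eq_of_mem _ _ _ (hh hj)

theorem groupPenalty_sub_piecewise_zero {G G1 : Finset (Finset ι)} (hg : g ∈ G)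
    (hG1 : G1 ⊆ G.erase g) (hsub : ∀ h ∈ G1, h ⊆ g) (β : ι → ℝ) :
    √(g.card : ℝ) * normOn g β + ∑ h ∈ G1, √(h.card : ℝ) * normOn h β
      ≤ groupPenalty G β - groupPenalty G (g.piecewise 0 β) := by
  set drop := fun h : Finset ι => √(h.card : ℝ) * (normOn h β - normOn h (g.piecewise 0 β))
  have hdrop_nonneg : ∀ h, 0 ≤ drop h := fun h =>
    mul_nonneg (Real.sqrt_nonneg _) (sub_nonneg.2 (normOn_piecewise_zero_le h β))
  have hdrop_sub : ∀ h ⊆ g, drop h = √(h.card : ℝ) * normOn h β := fun h hh => by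
    simp only [drop, normOn_piecewise_zero_of_subset hh, sub_zero]
  calc √(g.card : ℝ) * normOn g β + ∑ h ∈ G1, √(h.card : ℝ) * normOn h β
      = drop g + ∑ h ∈ G1, drop h := by
        rw [hdrop_sub g subset_rfl, sum_congr rfl fun h hh => hdrop_sub h (hsub h hh)]
    _ ≤ drop g + ∑ h ∈ G.erase g, drop h := by
        gcongr
        exact fun h _ _ => hdrop_nonneg h
    _ = groupPenalty G β - groupPenalty G (g.piecewise 0 β) := by
        rw [add_sum_erase G drop hg, groupPenalty, groupPenalty, ← sum_sub_distrib]
        simp only [drop, mul_sub]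

theorem dotProduct_piecewise_zero_sub [Fintype ι] (u β : ι → ℝ) :
    u ⬝ᵥ (g.piecewise (0 : ι → ℝ) β - β) = -∑ j ∈ g, u j * β j := by
  rw [dotProduct, ← sum_neg_distrib, ← univ_inter g, ← sum_ite_mem]
  refine sum_congr rfl fun j _ => ?_
  by_cases hj : j ∈ g <;> simp [hj]

noncomputable def subgroupSum (G1 : Finset (Finset ι)) (w : Finset ι → ι → ℝ) (j : ι) : ℝ :=
  ∑ h ∈ G1, if j ∈ h then √(h.card : ℝ) * w h j else 0

theorem sum_subgroupSum_mul_le {G1 : Finset (Finset ι)} {w : Finset ι → ι → ℝ}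
    (hsub : ∀ h ∈ G1, h ⊆ g) (hw : ∀ h ∈ G1, normOn h (w h) ≤ 1) (β : ι → ℝ) :
    ∑ j ∈ g, subgroupSum G1 w j * β j ≤ ∑ h ∈ G1, √(h.card : ℝ) * normOn h β := by
  have hswap : ∑ j ∈ g, subgroupSum G1 w j * β j
      = ∑ h ∈ G1, √(h.card : ℝ) * ∑ j ∈ h, w h j * β j := by
    simp only [subgroupSum, sum_mul]
    rw [sum_comm]
    refine sum_congr rfl fun h hh => ?_
    simp only [ite_mul, zero_mul, sum_ite_mem, inter_eq_right.2 (hsub h hh), mul_sum, mul_assoc]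
  rw [hswap]
  refine sum_le_sum fun h hh => mul_le_mul_of_nonneg_left ?_ (Real.sqrt_nonneg _)
  calc ∑ j ∈ h, w h j * β j ≤ normOn h (w h) * normOn h β := sum_mul_le_normOn_mul h _ _
    _ ≤ normOn h β := mul_le_of_le_one_left (normOn_nonneg h β) (hw h hh)

end ZeroBlock

theorem normOn_transpose_mulVec_le {m ι : Type*} [Fintype m] (X : Matrix m ι ℝ) (s : Finset ι)
    (d : m → ℝ) :
    normOn s (Xᵀ *ᵥ d) ≤ √(∑ j ∈ s, ∑ i, X i j ^ 2) * normOn univ d := by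
  rw [normOn, normOn, ← Real.sqrt_mul (sum_nonneg fun j _ => sum_nonneg fun i _ => sq_nonneg _),
    sum_mul]
  exact Real.sqrt_le_sqrt (sum_le_sum fun j _ => sum_mul_sq_le_sq_mul_sq _ _ _)

/-- Adding the two hypotheses gives `‖p - q‖ ^ 2 ≤ ⟪a - b, p - q⟫`; this is nonexpansiveness of
the projection onto a convex set, with `p`, `q` the projections of `a`, `b`. -/
theorem norm_sub_le_of_inner_nonpos {E : Type*} [NormedAddCommGroup E] [InnerProductSpace ℝ E]
    {a b p q : E} (hp : inner ℝ (a - p) (q - p) ≤ 0) (hq : inner ℝ (b - q) (p - q) ≤ 0) :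
    ‖p - q‖ ≤ ‖a - b‖ := by
  have hsum : inner ℝ (b - q) (p - q) - inner ℝ (a - p) (p - q)
      = inner ℝ (p - q) (p - q) - inner ℝ (a - b) (p - q) := by
    rw [← inner_sub_left, ← inner_sub_left]; congr 1; abel
  have hflip : inner ℝ (a - p) (q - p) = - inner ℝ (a - p) (p - q) := by
    rw [← inner_neg_right, neg_sub]
  have hsq : ‖p - q‖ ^ 2 ≤ ‖a - b‖ * ‖p - q‖ := by
    rw [← real_inner_self_eq_norm_sq]
    linarith [real_inner_le_norm (a - b) (p - q)]
  nlinarith [norm_nonneg (p - q), norm_nonneg (a - b)]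

theorem normOn_sub_le_of_dotProduct_nonpos {ι : Type*} [Fintype ι] {a b p q : ι → ℝ}
    (hp : (a - p) ⬝ᵥ (q - p) ≤ 0) (hq : (b - q) ⬝ᵥ (p - q) ≤ 0) :
    normOn univ (p - q) ≤ normOn univ (a - b) := by
  simp only [normOn_univ_eq_norm, WithLp.toLp_sub]
  apply norm_sub_le_of_inner_nonpos <;>
    simpa only [← WithLp.toLp_sub, EuclideanSpace.inner_toLp_toLp, star_trivial, dotProduct_comm]

theorem le_of_forall_pos_lt_one_le_add_mul {a b c : ℝ}
    (h : ∀ t : ℝ, 0 < t → t < 1 → a ≤ b + t * c) : a ≤ b := by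
  have hlim : Tendsto (fun t : ℝ => b + t * c) (𝓝[>] 0) (𝓝 b) := by
    have hcont : Continuous fun t : ℝ => b + t * c := by fun_prop
    simpa using hcont.continuousWithinAt (s := Set.Ioi 0) (x := 0) |>.tendsto
  refine ge_of_tendsto hlim ?_
  filter_upwards [Ioo_mem_nhdsGT one_pos] with t ht using h t ht.1 ht.2

noncomputable def dualPoint {N J : ℕ} (X : Matrix (Fin N) (Fin J) ℝ) (y : Fin N → ℝ) (lam : ℝ)
    (β : Fin J → ℝ) : Fin N → ℝ :=
  lam⁻¹ • (y - X *ᵥ β)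

def IsDualFeasible {N J : ℕ} (X : Matrix (Fin N) (Fin J) ℝ) (G : Finset (Finset (Fin J)))
    (θ : Fin N → ℝ) : Prop :=
  ∀ β, θ ⬝ᵥ (X *ᵥ β) ≤ groupPenalty G β

section Lasso

variable {N J : ℕ} {X : Matrix (Fin N) (Fin J) ℝ} {y : Fin N → ℝ} {G : Finset (Finset (Fin J))}
  {lam : ℝ} {β1 : Fin J → ℝ}

theorem ogLassoObj_eq (lam : ℝ) (β : Fin J → ℝ) :
    ogLassoObj X y G lam β = 1 / 2 * ∑ i, (y - X *ᵥ β) i ^ 2 + lam * groupPenalty G β :=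
  rfl

theorem sum_sub_smul_sq (ρ v : Fin N → ℝ) (t : ℝ) :
    ∑ i, (ρ - t • v) i ^ 2 = ∑ i, ρ i ^ 2 - 2 * t * (ρ ⬝ᵥ v) + t ^ 2 * (v ⬝ᵥ v) := by
  simp only [dotProduct, mul_sum, ← sum_sub_distrib, ← sum_add_distrib]
  exact sum_congr rfl fun i _ => by simp only [Pi.sub_apply, Pi.smul_apply, smul_eq_mul]; ring

theorem dualPoint_dotProduct_le (hlam : 0 < lam)
    (hopt : ∀ β, ogLassoObj X y G lam β1 ≤ ogLassoObj X y G lam β) (β : Fin J → ℝ) :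
    dualPoint X y lam β1 ⬝ᵥ (X *ᵥ (β - β1)) ≤ groupPenalty G β - groupPenalty G β1 := by
  set ρ := y - X *ᵥ β1
  set v := X *ᵥ (β - β1)
  have hρ : ρ ⬝ᵥ v ≤ lam * (groupPenalty G β - groupPenalty G β1) := by
    refine le_of_forall_pos_lt_one_le_add_mul (c := v ⬝ᵥ v / 2) fun t ht0 ht1 => ?_
    have hres : y - X *ᵥ (β1 + t • (β - β1)) = ρ - t • v := by
      rw [mulVec_add, mulVec_smul, sub_add_eq_sub_sub]
    have hmin := hopt (β1 + t • (β - β1))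
    rw [ogLassoObj_eq, ogLassoObj_eq, hres, sum_sub_smul_sq] at hmin
    have hpen := mul_le_mul_of_nonneg_left
      (groupPenalty_add_smul_sub_le G β1 β ht0.le ht1.le) hlam.le
    refine le_of_mul_le_mul_left ?_ ht0
    nlinarith
  rw [dualPoint, smul_dotProduct, smul_eq_mul, inv_mul_le_iff₀ hlam]
  exact hρ

theorem isDualFeasible_dualPoint (hlam : 0 < lam)
    (hopt : ∀ β, ogLassoObj X y G lam β1 ≤ ogLassoObj X y G lam β) :
    IsDualFeasible X G (dualPoint X y lam β1) := fun β => by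
  have h := dualPoint_dotProduct_le hlam hopt (β + β1)
  rw [add_sub_cancel_right] at h
  linarith [groupPenalty_add_le G β β1]

theorem dualPoint_dotProduct_mulVec_self (hlam : 0 < lam)
    (hopt : ∀ β, ogLassoObj X y G lam β1 ≤ ogLassoObj X y G lam β) :
    dualPoint X y lam β1 ⬝ᵥ (X *ᵥ β1) = groupPenalty G β1 := by
  have h := dualPoint_dotProduct_le hlam hopt 0
  rw [zero_sub, mulVec_neg, dotProduct_neg, groupPenalty_zero] at h
  linarith [isDualFeasible_dualPoint hlam hopt β1]

/-- `dualPoint X y lam β1` is the projection of `y / lam` onto the dual feasible set. -/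
theorem dotProduct_sub_dualPoint_nonpos (hlam : 0 < lam)
    (hopt : ∀ β, ogLassoObj X y G lam β1 ≤ ogLassoObj X y G lam β) {θ : Fin N → ℝ}
    (hθ : IsDualFeasible X G θ) :
    (lam⁻¹ • y - dualPoint X y lam β1) ⬝ᵥ (θ - dualPoint X y lam β1) ≤ 0 := by
  have hfit : lam⁻¹ • y - dualPoint X y lam β1 = lam⁻¹ • (X *ᵥ β1) := by
    rw [dualPoint, smul_sub, sub_sub_cancel]
  rw [hfit, smul_dotProduct, dotProduct_comm, sub_dotProduct, smul_eq_mul,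
    dualPoint_dotProduct_mulVec_self hlam hopt]
  exact mul_nonpos_of_nonneg_of_nonpos (inv_nonneg.2 hlam.le) (by linarith [hθ β1])

theorem normOn_dualPoint_sub_le {lam0 : ℝ} {β0 : Fin J → ℝ} (hlam : 0 < lam)
    (hopt : ∀ β, ogLassoObj X y G lam β1 ≤ ogLassoObj X y G lam β) (hlam0 : 0 < lam0)
    (hopt0 : ∀ β, ogLassoObj X y G lam0 β0 ≤ ogLassoObj X y G lam0 β) :
    normOn univ (dualPoint X y lam β1 - dualPoint X y lam0 β0)
      ≤ |lam⁻¹ - lam0⁻¹| * normOn univ y := by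
  calc normOn univ (dualPoint X y lam β1 - dualPoint X y lam0 β0)
      ≤ normOn univ (lam⁻¹ • y - lam0⁻¹ • y) :=
        normOn_sub_le_of_dotProduct_nonpos
          (dotProduct_sub_dualPoint_nonpos hlam hopt (isDualFeasible_dualPoint hlam0 hopt0))
          (dotProduct_sub_dualPoint_nonpos hlam0 hopt0 (isDualFeasible_dualPoint hlam hopt))
    _ = |lam⁻¹ - lam0⁻¹| * normOn univ y := by rw [← sub_smul, normOn_smul]

theorem normOn_transpose_dualPoint_sub_le {lam0 : ℝ} {β0 : Fin J → ℝ} (hlam : 0 < lam)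
    (hopt : ∀ β, ogLassoObj X y G lam β1 ≤ ogLassoObj X y G lam β) (hlam0 : 0 < lam0)
    (hopt0 : ∀ β, ogLassoObj X y G lam0 β0 ≤ ogLassoObj X y G lam0 β) (g : Finset (Fin J))
    (s : Fin J → ℝ) :
    normOn g (Xᵀ *ᵥ dualPoint X y lam β1 - s)
      ≤ normOn g (Xᵀ *ᵥ dualPoint X y lam0 β0 - s)
        + √(∑ j ∈ g, ∑ i, X i j ^ 2) * (|lam⁻¹ - lam0⁻¹| * normOn univ y) := by
  set θ1 := dualPoint X y lam β1
  set θ0 := dualPoint X y lam0 β0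
  calc normOn g (Xᵀ *ᵥ θ1 - s)
      ≤ normOn g (Xᵀ *ᵥ θ0 - s) + normOn g (Xᵀ *ᵥ (θ1 - θ0)) := by
        rw [mulVec_sub]
        simpa using normOn_add_le g (Xᵀ *ᵥ θ0 - s) (Xᵀ *ᵥ θ1 - Xᵀ *ᵥ θ0)
    _ ≤ normOn g (Xᵀ *ᵥ θ0 - s) + √(∑ j ∈ g, ∑ i, X i j ^ 2) * normOn univ (θ1 - θ0) := by
        grw [normOn_transpose_mulVec_le]
    _ ≤ normOn g (Xᵀ *ᵥ θ0 - s)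
          + √(∑ j ∈ g, ∑ i, X i j ^ 2) * (|lam⁻¹ - lam0⁻¹| * normOn univ y) := by
        grw [normOn_dualPoint_sub_le hlam hopt hlam0 hopt0]

theorem eq_zero_of_normOn_sub_subgroupSum_lt {G1 : Finset (Finset (Fin J))} {g : Finset (Fin J)}
    {w : Finset (Fin J) → Fin J → ℝ} (hlam : 0 < lam)
    (hopt : ∀ β, ogLassoObj X y G lam β1 ≤ ogLassoObj X y G lam β) (hg : g ∈ G)
    (hG1 : G1 ⊆ G.erase g) (hsub : ∀ h ∈ G1, h ⊆ g) (hw : ∀ h ∈ G1, normOn h (w h) ≤ 1)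
    (hlt : normOn g (Xᵀ *ᵥ dualPoint X y lam β1 - subgroupSum G1 w) < √(g.card : ℝ)) :
    ∀ j ∈ g, β1 j = 0 := by
  set u := Xᵀ *ᵥ dualPoint X y lam β1
  set s := subgroupSum G1 w
  set S := ∑ h ∈ G1, √(h.card : ℝ) * normOn h β1
  have hvar := dualPoint_dotProduct_le hlam hopt (g.piecewise 0 β1)
  rw [dotProduct_mulVec, ← mulVec_transpose, dotProduct_piecewise_zero_sub] at hvar
  have hdrop := groupPenalty_sub_piecewise_zero hg hG1 hsub β1
  have hpair : ∑ j ∈ g, u j * β1 j ≤ normOn g (u - s) * normOn g β1 + S :=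
    calc ∑ j ∈ g, u j * β1 j = ∑ j ∈ g, (u - s) j * β1 j + ∑ j ∈ g, s j * β1 j := by
          rw [← sum_add_distrib]
          exact sum_congr rfl fun j _ => by rw [Pi.sub_apply]; ring
      _ ≤ normOn g (u - s) * normOn g β1 + S :=
          add_le_add (sum_mul_le_normOn_mul g _ _) (sum_subgroupSum_mul_le hsub hw β1)
  have hkey : √(g.card : ℝ) * normOn g β1 ≤ normOn g (u - s) * normOn g β1 := by linarith
  have hzero : normOn g β1 = 0 := by nlinarith [normOn_nonneg g β1]
  exact (normOn_eq_zero_iff g).1 hzero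

end Lasso

/-- Theorem 1 (OLS screening rule): if for some feasible subgradients w_h on the
inclusive subgroups Ḡ₁ the screening quantity is below
√(n_g) − ‖X_g‖_F‖y‖₂(1/λ − 1/λ₀), then every solution at λ has β*_g(λ) = 0. -/
theorem ols_screening {N J : ℕ} (X : Matrix (Fin N) (Fin J) ℝ) (y : Fin N → ℝ)
    (lam lam0 : ℝ) (hlam : 0 < lam) (hll : lam < lam0)
    (G : Finset (Finset (Fin J))) (g : Finset (Fin J)) (hg : g ∈ G)
    (β0 : Fin J → ℝ) (hopt0 : ∀ β : Fin J → ℝ, ogLassoObj X y G lam0 β0 ≤ ogLassoObj X y G lam0 β)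
    (θstar : Fin N → ℝ) (hθ : ∀ i, θstar i = (y i - X.mulVec β0 i) / lam0)
    (G1 : Finset (Finset (Fin J))) (hG1 : G1 = (G.erase g).filter (fun h => h ⊆ g))
    (w : Finset (Fin J) → Fin J → ℝ)
    (hw : ∀ h ∈ G1, Real.sqrt (∑ j ∈ h, (w h j) ^ 2) ≤ 1)
    (hscreen : Real.sqrt (∑ j ∈ g,
        ((∑ i, X i j * θstar i)
          - ∑ h ∈ G1, (if j ∈ h then Real.sqrt (h.card : ℝ) * w h j else 0)) ^ 2)
      < Real.sqrt (g.card : ℝ)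
        - Real.sqrt (∑ j ∈ g, ∑ i, X i j ^ 2) * Real.sqrt (∑ i, y i ^ 2)
          * (1 / lam - 1 / lam0)) :
    ∀ β1 : Fin J → ℝ,
      (∀ β : Fin J → ℝ, ogLassoObj X y G lam β1 ≤ ogLassoObj X y G lam β) →
      ∀ j ∈ g, β1 j = 0 := by
  intro β1 hopt1
  have hlam0 : 0 < lam0 := hlam.trans hll
  have hθstar : θstar = dualPoint X y lam0 β0 := funext fun i => by
    rw [hθ i, dualPoint, Pi.smul_apply, smul_eq_mul, inv_mul_eq_div]; rfl
  have hgap : |lam⁻¹ - lam0⁻¹| = 1 / lam - 1 / lam0 := by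
    rw [one_div, one_div, abs_of_nonneg (sub_nonneg.2 (inv_anti₀ hlam hll.le))]
  have hscreen' : normOn g (Xᵀ *ᵥ θstar - subgroupSum G1 w)
      < √(g.card : ℝ) - √(∑ j ∈ g, ∑ i, X i j ^ 2) * normOn univ y * (1 / lam - 1 / lam0) :=
    hscreen
  have hG1sub : G1 ⊆ G.erase g := by rw [hG1]; exact filter_subset _ _
  have hG1g : ∀ h ∈ G1, h ⊆ g := by rw [hG1]; exact fun h hh => (mem_filter.1 hh).2
  refine eq_zero_of_normOn_sub_subgroupSum_lt hlam hopt1 hg hG1sub hG1g hw ?_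
  have hmove := normOn_transpose_dualPoint_sub_le hlam hopt1 hlam0 hopt0 g (subgroupSum G1 w)
  rw [← hθstar, hgap] at hmove
  linarith
end
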